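/- Let S ⊆ ℝ be measurable and μ ∈ ℝ with α(μ;S) > 0. Then the mean of the truncated Gaussian satisfies |E_{y ~ N(μ,1,S)}[y] − μ| ≤ √(2·log(1/α(μ;S)) + 4). -/

import Mathlib

/-!
With `α = N(μ,1)(S)`, the shift of the mean is `α⁻¹ ∫_S (y - μ) dN(μ,1)`, and `y - μ` has
sub-Gaussian moment generating function `exp (t ^ 2 / 2)`. Integrating the pointwise bound
`x ≤ c + c⁻¹ exp (c x - c ^ 2 - 1)` (from `t + 1 ≤ exp t`) over `S` gives
`∫_S X ≤ c α + c⁻¹ exp (-c ^ 2 / 2 - 1)` for every `c > 0`. The choice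
`c ^ 2 = 2 log (1 / α) + 2` turns the second term into `α exp (-2) / c`, and
`c + exp (-2) / c ≤ √(c ^ 2 + 2)`.
-/

open MeasureTheory ProbabilityTheory Real
open scoped RealInnerProductSpace ENNReal

/-- The survival probability `α(μ; S) = N(μ,1)(S)`. -/
noncomputable def survival (μ : ℝ) (S : Set ℝ) : ℝ :=
  (gaussianReal μ 1 S).toReal

/-- The truncated Gaussian `N(μ,1,S)`, i.e. `N(μ,1)` conditioned on `S`. -/
noncomputable def truncGaussian (μ : ℝ) (S : Set ℝ) : Measure ℝ :=
  (gaussianReal μ 1)[|S]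

open scoped NNReal

lemma le_add_inv_mul_exp_mul {c : ℝ} (hc : 0 < c) (x : ℝ) :
    x ≤ c + c⁻¹ * exp (-c ^ 2 - 1) * exp (c * x) := by
  have hexp : c * (x - c) ≤ exp (c * x - c ^ 2 - 1) := by
    linarith [add_one_le_exp (c * x - c ^ 2 - 1)]
  have hdiv : x - c ≤ exp (c * x - c ^ 2 - 1) / c := (le_div_iff₀' hc).2 hexp
  rw [mul_assoc, ← exp_add, show -c ^ 2 - 1 + c * x = c * x - c ^ 2 - 1 by ring, ← div_eq_inv_mul]
  linarith

lemma add_mul_inv_le_sqrt_sq_add_two {c a : ℝ} (hc : 1 ≤ c) (ha₀ : 0 ≤ a) (ha : a ≤ 1 / 2) :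
    c + a * c⁻¹ ≤ √(c ^ 2 + 2) := by
  have hinv : c⁻¹ ≤ 1 := inv_le_one_of_one_le₀ hc
  have hcc : c * c⁻¹ = 1 := mul_inv_cancel₀ (by linarith)
  have hac : a * c⁻¹ ≤ 1 / 2 := by nlinarith [inv_nonneg.2 (zero_le_one.trans hc)]
  have hsq : (c + a * c⁻¹) ^ 2 = c ^ 2 + 2 * a * (c * c⁻¹) + (a * c⁻¹) ^ 2 := by ring
  rw [le_sqrt (by positivity) (by positivity), hsq, hcc]
  nlinarith [mul_nonneg ha₀ (inv_nonneg.2 (zero_le_one.trans hc))]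

namespace ProbabilityTheory.HasSubgaussianMGF

variable {Ω : Type*} [MeasurableSpace Ω] {ν : Measure Ω} {X : Ω → ℝ}

lemma setIntegral_le [IsFiniteMeasure ν] (h : HasSubgaussianMGF X 1 ν) (S : Set Ω) {c : ℝ}
    (hc : 0 < c) :
    ∫ ω in S, X ω ∂ν ≤ c * ν.real S + c⁻¹ * exp (-(c ^ 2 / 2) - 1) := by
  have hexp : Integrable (fun ω ↦ exp (c * X ω)) ν := h.integrable_exp_mul c
  have hbound : Integrable (fun ω ↦ c + c⁻¹ * exp (-c ^ 2 - 1) * exp (c * X ω)) ν :=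
    (integrable_const c).add (hexp.const_mul _)
  calc ∫ ω in S, X ω ∂ν
      ≤ ∫ ω in S, (c + c⁻¹ * exp (-c ^ 2 - 1) * exp (c * X ω)) ∂ν :=
        setIntegral_mono h.integrable.integrableOn hbound.integrableOn
          fun ω ↦ le_add_inv_mul_exp_mul hc (X ω)
    _ = c * ν.real S + c⁻¹ * exp (-c ^ 2 - 1) * ∫ ω in S, exp (c * X ω) ∂ν := by
        rw [integral_add (integrable_const c) (hexp.const_mul _).integrableOn, integral_const,
          integral_const_mul, smul_eq_mul, measureReal_restrict_apply_univ, mul_comm]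
    _ ≤ c * ν.real S + c⁻¹ * exp (-c ^ 2 - 1) * mgf X ν c := by
        gcongr
        exact setIntegral_le_integral hexp (ae_of_all _ fun _ ↦ (exp_pos _).le)
    _ ≤ c * ν.real S + c⁻¹ * exp (-c ^ 2 - 1) * exp (c ^ 2 / 2) := by
        gcongr
        simpa using h.mgf_le c
    _ = c * ν.real S + c⁻¹ * exp (-(c ^ 2 / 2) - 1) := by
        rw [mul_assoc, ← exp_add]
        ring_nf

lemma abs_setIntegral_le [IsProbabilityMeasure ν] (h : HasSubgaussianMGF X 1 ν) {S : Set Ω}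
    (hS : 0 < ν.real S) :
    |∫ ω in S, X ω ∂ν| ≤ ν.real S * √(2 * log (1 / ν.real S) + 4) := by
  set α := ν.real S
  have hlog : 0 ≤ log (1 / α) := log_nonneg (one_le_one_div hS measureReal_le_one)
  set c := √(2 * log (1 / α) + 2)
  have hc : 1 ≤ c := one_le_sqrt.2 (by linarith)
  have hc2 : c ^ 2 = 2 * log (1 / α) + 2 := sq_sqrt (by linarith)
  have htail : exp (-(c ^ 2 / 2) - 1) = α * exp (-2) := by
    rw [hc2, one_div, log_inv, show -((2 * -log α + 2) / 2) - 1 = log α + -2 by ring, exp_add,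
      exp_log hS]
  have hupper := h.setIntegral_le S (c := c) (by linarith)
  have hlower := h.neg.setIntegral_le S (c := c) (by linarith)
  simp only [Pi.neg_apply, integral_neg] at hlower
  rw [htail] at hupper hlower
  calc |∫ ω in S, X ω ∂ν| ≤ α * (c + exp (-2) * c⁻¹) := by
        rw [abs_le]
        constructor <;> linarith
    _ ≤ α * √(2 * log (1 / α) + 4) := by
        gcongr
        rw [show 2 * log (1 / α) + 4 = c ^ 2 + 2 by rw [hc2]; ring]
        refine add_mul_inv_le_sqrt_sq_add_two hc (exp_pos _).le ?_
        rw [exp_neg, inv_le_comm₀ (exp_pos 2) (by norm_num)]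
        linarith [add_one_le_exp 2]

end ProbabilityTheory.HasSubgaussianMGF

lemma hasSubgaussianMGF_id_gaussianReal_zero (v : ℝ≥0) :
    HasSubgaussianMGF id v (gaussianReal 0 v) where
  integrable_exp_mul t := integrable_exp_mul_gaussianReal t
  mgf_le t := by simp [mgf_id_gaussianReal]

lemma hasSubgaussianMGF_sub_gaussianReal (μ : ℝ) (v : ℝ≥0) :
    HasSubgaussianMGF (fun y ↦ y - μ) v (gaussianReal μ v) := by
  rw [← HasSubgaussianMGF.id_map_iff (by fun_prop), gaussianReal_map_sub_const, sub_self]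
  exact hasSubgaussianMGF_id_gaussianReal_zero v

lemma integral_cond_sub_const {Ω : Type*} [MeasurableSpace Ω] {ν : Measure Ω} [IsFiniteMeasure ν]
    {S : Set Ω} (hS : ν S ≠ 0) {f : Ω → ℝ} (hf : Integrable f ν) (m : ℝ) :
    ∫ ω, f ω ∂ν[|S] - m = (ν.real S)⁻¹ * ∫ ω in S, (f ω - m) ∂ν := by
  have := cond_isProbabilityMeasure (μ := ν) hS
  have hf' : Integrable f ν[|S] := hf.restrict.smul_measure (ENNReal.inv_ne_top.2 hS)
  have hsub : ∫ ω, f ω ∂ν[|S] - m = ∫ ω, (f ω - m) ∂ν[|S] := by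
    rw [integral_sub hf' (integrable_const m), integral_const, probReal_univ, one_smul]
  rw [hsub, ProbabilityTheory.cond, integral_smul_measure, ENNReal.toReal_inv, smul_eq_mul]
  rfl

theorem stmt3 (S : Set ℝ) (μ : ℝ) (h : 0 < survival μ S) :
    |(∫ y, y ∂(truncGaussian μ S)) - μ| ≤
      Real.sqrt (2 * Real.log (1 / survival μ S) + 4) := by
  have hS : gaussianReal μ 1 S ≠ 0 := fun h0 ↦ by simp [survival, h0] at h
  have hX := hasSubgaussianMGF_sub_gaussianReal μ 1
  have hmean := integral_cond_sub_const (f := fun y ↦ y) hS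
    ((memLp_id_gaussianReal 1).integrable le_rfl) μ
  change 0 < (gaussianReal μ 1).real S at h
  rw [truncGaussian, survival, ← Measure.real, hmean, abs_mul, abs_inv, abs_of_pos h]
  calc _ ≤ ((gaussianReal μ 1).real S)⁻¹ * ((gaussianReal μ 1).real S *
          √(2 * log (1 / (gaussianReal μ 1).real S) + 4)) := by
        gcongr
        exact hX.abs_setIntegral_le h
    _ = _ := by rw [inv_mul_cancel_left₀ h.ne']
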